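/- Let P be a probability measure on Ω and let Q be a probability measure on Ω which is invariant with respect to the point of view of the particle, equivalent to the translation-invariant i.i.d. measure P, with Radon–Nikodym derivative f = dQ/dP. Then for P-almost every ω ∈ Ω, for every n ∈ ℕ and every x ∈ ℤ^d, f(σ_x ω) = Σ_{y∈ℤ^d} P_ω^y(X_n = x) · f(σ_y ω). -/

import Mathlib

open MeasureTheory Filter
open scoped ENNReal

noncomputable section

namespace RWRE

/-- sites of the lattice `ℤ^d`. -/
abbrev Site (d : ℕ) := Fin d → ℤ

/-- index set for the `2d` nearest-neighbour steps: `(i, true) ↦ e_i`, `(i, false) ↦ -e_i`. -/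
abbrev StepIdx (d : ℕ) := Fin d × Bool

/-- the signed unit vector corresponding to a step index. -/
def stepVec {d : ℕ} (s : StepIdx d) : Site d :=
  fun j => if j = s.1 then (if s.2 then 1 else -1) else 0

/-- probability vectors on the `2d` nearest-neighbour steps. -/
abbrev EnvAt (d : ℕ) := {p : StepIdx d → ℝ // (∀ s, 0 ≤ p s) ∧ ∑ s, p s = 1}

/-- the space of environments `Ω = (M_d)^{ℤ^d}`. -/
abbrev Env (d : ℕ) := Site d → EnvAt d

/-- the space of trajectories. -/
abbrev Path (d : ℕ) := ℕ → Site d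

/-- the shift of the environment by `x`. -/
def shift {d : ℕ} (x : Site d) (ω : Env d) : Env d := fun y => ω (x + y)

/-- transition probability in environment `ω` from site `y` by increment `v`. -/
def envP {d : ℕ} (ω : Env d) (y v : Site d) : ℝ≥0∞ :=
  ∑ s : StepIdx d, if v = stepVec s then ENNReal.ofReal ((ω y).1 s) else 0

/-- `μ` is the quenched law of the walk started at `x` in the environment `ω`: a
probability measure on path space whose cylinder probabilities are the products of
the transition probabilities of `ω`. -/
def IsQuenched {d : ℕ} (ω : Env d) (x : Site d) (μ : Measure (Path d)) : Prop :=
  IsProbabilityMeasure μ ∧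
    ∀ (n : ℕ) (γ : ℕ → Site d),
      μ {f | ∀ i ≤ n, f i = γ i} =
        (if γ 0 = x then 1 else 0) *
          ∏ i ∈ Finset.range n, envP ω (γ i) (γ (i + 1) - γ i)

/-- `Pq` is a measurable family of quenched laws. -/
def IsQuenchedFamily {d : ℕ} (Pq : Env d → Site d → Measure (Path d)) : Prop :=
  (∀ ω x, IsQuenched ω x (Pq ω x)) ∧
    ∀ (x : Site d) (A : Set (Path d)), MeasurableSet A →
      Measurable fun ω => Pq ω x A

/-- the annealed probability `ℙ^x(A) = ∫ P_ω^x(A) dP(ω)` of a path event. -/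
def ann {d : ℕ} (P : Measure (Env d)) (Pq : Env d → Site d → Measure (Path d))
    (x : Site d) (A : Set (Path d)) : ℝ≥0∞ :=
  ∫⁻ ω, Pq ω x A ∂P

/-- the annealed expectation `𝔼^x[g]` of a real path functional. -/
def annE {d : ℕ} (P : Measure (Env d)) (Pq : Env d → Site d → Measure (Path d))
    (x : Site d) (g : Path d → ℝ) : ℝ :=
  ∫ ω, (∫ f, g f ∂(Pq ω x)) ∂P

/-- `P` is an i.i.d. measure on the space of environments: its finite-dimensional
marginals are products of a fixed single-site probability measure. -/
def IsIID {d : ℕ} (P : Measure (Env d)) : Prop :=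
  ∃ ν : Measure (EnvAt d), IsProbabilityMeasure ν ∧
    ∀ (s : Finset (Site d)) (B : Site d → Set (EnvAt d)),
      (∀ x, MeasurableSet (B x)) →
        P {ω | ∀ x ∈ s, ω x ∈ B x} = ∏ x ∈ s, ν (B x)

/-- uniform ellipticity of `P`. -/
def UniformlyElliptic {d : ℕ} (P : Measure (Env d)) : Prop :=
  ∃ η : ℝ, 0 < η ∧ ∀ s : StepIdx d, P {ω : Env d | (ω 0).1 s < η} = 0

/-- a lattice point, viewed as a real vector. -/
def toR {d : ℕ} (x : Site d) : Fin d → ℝ := fun i => (x i : ℝ)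

/-- inner product of a lattice point with a real direction. -/
def dotR {d : ℕ} (x : Site d) (ℓ : Fin d → ℝ) : ℝ := ∑ i, (x i : ℝ) * ℓ i

/-- the euclidean norm of a real vector. -/
def norm2R {d : ℕ} (ℓ : Fin d → ℝ) : ℝ := Real.sqrt (∑ i, ℓ i ^ 2)

/-- the event `{T_L^{(-ℓ)} < T_L^{(ℓ)}}` that the walk reaches level `L` in
direction `-ℓ` strictly before reaching level `L` in direction `ℓ`. -/
def backtrackEvent {d : ℕ} (ℓ : Fin d → ℝ) (L : ℝ) : Set (Path d) :=
  {f | ∃ n, L ≤ dotR (f n) (-ℓ) ∧ ∀ m ≤ n, dotR (f m) ℓ < L}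

/-- condition `(T_γ)` in the direction `ℓ₀`. -/
def CondTAt {d : ℕ} (P : Measure (Env d)) (Pq : Env d → Site d → Measure (Path d))
    (γ : ℝ) (ℓ₀ : Fin d → ℝ) : Prop :=
  ∃ ε : ℝ, 0 < ε ∧ ∀ ℓ : Fin d → ℝ, norm2R ℓ = 1 → norm2R (ℓ - ℓ₀) < ε →
    ∃ C : ℝ, ∀ L : ℝ, 0 < L →
      ann P Pq 0 (backtrackEvent ℓ L) ≤ ENNReal.ofReal (C * Real.exp (-(L ^ γ)))

/-- condition `(T_γ)` in some direction. -/
def CondT {d : ℕ} (P : Measure (Env d)) (Pq : Env d → Site d → Measure (Path d))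
    (γ : ℝ) : Prop :=
  ∃ ℓ₀ : Fin d → ℝ, norm2R ℓ₀ = 1 ∧ CondTAt P Pq γ ℓ₀

/-- condition `(𝒫)`: condition `(T_γ)` holds for some `γ ∈ (0,1)` in some direction. -/
def CondP {d : ℕ} (P : Measure (Env d)) (Pq : Env d → Site d → Measure (Path d)) : Prop :=
  ∃ γ : ℝ, 0 < γ ∧ γ < 1 ∧ CondT P Pq γ

/-- condition `(𝒫)` in a given direction. -/
def CondPAt {d : ℕ} (P : Measure (Env d)) (Pq : Env d → Site d → Measure (Path d))
    (ℓ₀ : Fin d → ℝ) : Prop :=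
  ∃ γ : ℝ, 0 < γ ∧ γ < 1 ∧ CondTAt P Pq γ ℓ₀

/-- `Q` is invariant with respect to the point of view of the particle. -/
def InvariantPOV {d : ℕ} (Q : Measure (Env d)) : Prop :=
  ∀ g : Env d → ℝ, Measurable g → (∃ C : ℝ, ∀ ω, |g ω| ≤ C) →
    ∫ ω, (∑ s : StepIdx d, (ω 0).1 s * g (shift (stepVec s) ω)) ∂Q = ∫ ω, g ω ∂Q

/-- superpolynomial decay: `g N = N^{-ξ(1)}`. -/
def Superpoly (g : ℕ → ℝ) : Prop :=
  ∀ k : ℕ, Tendsto (fun N : ℕ => (N : ℝ) ^ k * g N) atTop (nhds 0)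

/-- the first coordinate `⟨x, e₁⟩` of a lattice point. -/
def firstCoord {d : ℕ} (x : Fin d → ℤ) : ℤ := if h : 0 < d then x ⟨0, h⟩ else 0

/-- the first coordinate `⟨ℓ, e₁⟩` of a real vector. -/
def firstCoordR {d : ℕ} (ℓ : Fin d → ℝ) : ℝ := if h : 0 < d then ℓ ⟨0, h⟩ else 0

/-- the first standard basis vector, as a real direction. -/
def e1R (d : ℕ) : Fin d → ℝ := fun i => if (i : ℕ) = 0 then 1 else 0

/-- `R_k(N) = ⌊exp((log log N)^{k+1})⌋`. -/
def Rk (k N : ℕ) : ℕ := ⌊Real.exp (Real.log (Real.log (N : ℝ)) ^ (k + 1))⌋₊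

/-- the `ℓ¹`-norm of a lattice point. -/
def norm1 {d : ℕ} (x : Site d) : ℤ := ∑ i, |x i|

/-- the parallelogram `𝒫(z,N)` (relative to the asymptotic direction `ϑ`). -/
def para {d : ℕ} (ϑ : Fin d → ℝ) (z : Site d) (N : ℕ) : Set (Site d) :=
  {x | |firstCoord (x - z)| < (N : ℤ) ^ 2 ∧
    ∀ i, |((x - z) i : ℝ) - (firstCoord (x - z) : ℝ) / firstCoordR ϑ * ϑ i|
      < (N : ℝ) * (Rk 5 N : ℝ)}

/-- the middle third `𝒫̃(z,N)` of the parallelogram. -/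
def paraMid {d : ℕ} (ϑ : Fin d → ℝ) (z : Site d) (N : ℕ) : Set (Site d) :=
  {x | 3 * |firstCoord (x - z)| < (N : ℤ) ^ 2 ∧
    ∀ i, 3 * |((x - z) i : ℝ) - (firstCoord (x - z) : ℝ) / firstCoordR ϑ * ϑ i|
      < (N : ℝ) * (Rk 5 N : ℝ)}

/-- the boundary `∂𝒫(z,N)`. -/
def paraBdry {d : ℕ} (ϑ : Fin d → ℝ) (z : Site d) (N : ℕ) : Set (Site d) :=
  {x | x ∉ para ϑ z N ∧ ∃ y ∈ para ϑ z N, norm1 (x - y) = 1}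

/-- the right boundary `∂⁺𝒫(z,N)`. -/
def paraBdryPlus {d : ℕ} (ϑ : Fin d → ℝ) (z : Site d) (N : ℕ) : Set (Site d) :=
  {x | x ∈ paraBdry ϑ z N ∧ firstCoord (x - z) = (N : ℤ) ^ 2}

/-- the walk hits the set `A`. -/
def hits {d : ℕ} (A : Set (Site d)) (f : Path d) : Prop := ∃ n, f n ∈ A

/-- the hitting time `T_A` of a set of sites. -/
def hitTime {d : ℕ} (A : Set (Site d)) (f : Path d) : ℕ := sInf {n | f n ∈ A}

/-- the hyperplane `H_M = {x : ⟨x,e₁⟩ = M}`. -/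
def hyper {d : ℕ} (M : ℤ) : Set (Site d) := {x | firstCoord x = M}

/-- the event that the walk hits `A`, at a time belonging to `I`, and in a point of `Δ`. -/
def exitEvent {d : ℕ} (A Δ : Set (Site d)) (I : Set ℕ) : Set (Path d) :=
  {f | hits A f ∧ f (hitTime A f) ∈ Δ ∧ hitTime A f ∈ I}

/-- the `d`-dimensional cube with corner `a` and side length `L`. -/
def cube {d : ℕ} (a : Site d) (L : ℕ) : Set (Site d) :=
  {x | ∀ i, a i ≤ x i ∧ x i < a i + (L : ℤ)}

/-- the same cube, as a finite set. -/
def cubeF {d : ℕ} (a : Site d) (L : ℕ) : Finset (Site d) :=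
  Fintype.piFinset fun i => Finset.Ico (a i) (a i + (L : ℤ))

/-- a `(d-1)`-dimensional cube of side length `L` inside the hyperplane `H_m`. -/
def cubeHyp {d : ℕ} (m : ℤ) (a : Site d) (L : ℕ) : Set (Site d) :=
  {x | firstCoord x = m ∧ ∀ i : Fin d, (i : ℕ) ≠ 0 → a i ≤ x i ∧ x i < a i + (L : ℤ)}

/-- the time interval `[t, t + L)`. -/
def interval (t L : ℕ) : Set ℕ := {n | t ≤ n ∧ n < t + L}

/-- `S` is the set of corners of a partition of `ℤ^d` into cubes of side length `L`. -/
def IsCubePartition {d : ℕ} (L : ℕ) (S : Set (Site d)) : Prop :=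
  (∀ x : Site d, ∃ a ∈ S, x ∈ cube a L) ∧
    ∀ a ∈ S, ∀ b ∈ S, a ≠ b → Disjoint (cube a L) (cube b L)

/-- `t` is a regeneration time of the path `f` in direction `e₁`. -/
def IsRegen {d : ℕ} (f : Path d) (t : ℕ) : Prop :=
  (∀ s < t, firstCoord (f s) < firstCoord (f t)) ∧
    firstCoord (f t) < firstCoord (f (t + 1)) ∧
    ∀ s, t + 1 < s → firstCoord (f (t + 1)) < firstCoord (f s)

/-- the `k`-th regeneration time `τ_k` (with the convention `τ₀ = 0`). -/
def regTime {d : ℕ} (f : Path d) : ℕ → ℕ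
  | 0 => 0
  | k + 1 => sInf {t | regTime f k < t ∧ IsRegen f t}

/-- the event `B_N` that each of the first `N²` regeneration gaps is at most `R(N)`. -/
def BN {d : ℕ} (N : ℕ) : Set (Path d) :=
  {f | ∀ k, 1 ≤ k → k ≤ N ^ 2 → regTime f k - regTime f (k - 1) ≤ Rk 1 N}

/-- `ϑ` is the asymptotic direction `lim Xₙ/‖Xₙ‖₂` of the walk, annealed a.s. -/
def DirSpeed {d : ℕ} (P : Measure (Env d)) (Pq : Env d → Site d → Measure (Path d))
    (ϑ : Fin d → ℝ) : Prop :=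
  ann P Pq 0 {f | ¬ Tendsto (fun n => fun i => toR (f n) i / norm2R (toR (f n)))
    atTop (nhds ϑ)} = 0

/-- the σ-algebra generated by the environment in the half space `⟨z,e₁⟩ ≤ m`. -/
def sigmaUpTo (d : ℕ) (m : ℤ) : MeasurableSpace (Env d) :=
  MeasurableSpace.comap
    (fun ω => (fun z : {z : Site d // firstCoord z ≤ m} => ω z.1)) inferInstance

/-!
Write `f = dQ/dP`. Testing the invariance of `Q` against indicators and moving the step shift
`σ_e` from the test function onto `f` (the shifts preserve the i.i.d. measure `P`) gives, for
`P`-a.e. `ω`, `f ω = ∑_e ω(-e, e) f(σ_{-e} ω)`. Translating by every `x ∈ ℤ^d`, the weights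
`m x = f(σ_x ω)` form an invariant measure of the quenched walk in `ω`, i.e. `m = m p_ω`, hence
`m = m p_ω^n` for every `n`, and `p_ω^n(y, x) = P_ω^y(X_n = x)`.
-/

variable {d : ℕ}

section Shift

lemma measurable_shift (x : Site d) : Measurable (shift (d := d) x) :=
  measurable_pi_lambda _ fun y => measurable_pi_apply (x + y)

lemma shift_shift (a b : Site d) (ω : Env d) : shift a (shift b ω) = shift (b + a) ω := by
  funext y; simp [shift, add_assoc]

lemma shift_zero (ω : Env d) : shift 0 ω = ω := by
  funext y; simp [shift]

lemma IsIID.isProbabilityMeasure {P : Measure (Env d)} (hP : IsIID P) :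
    IsProbabilityMeasure P := by
  obtain ⟨ν, -, hν⟩ := hP
  constructor
  simpa using hν ∅ (fun _ => Set.univ) fun _ => MeasurableSet.univ

lemma preimage_shift_setOf_forall_mem (v : Site d) (s : Finset (Site d))
    (B : Site d → Set (EnvAt d)) :
    shift v ⁻¹' {ω | ∀ x ∈ s, ω x ∈ B x}
      = {ω | ∀ x ∈ s.map (addLeftEmbedding v), ω x ∈ B (x - v)} := by
  ext ω
  simp [shift]

lemma IsIID.measurePreserving_shift {P : Measure (Env d)} (hP : IsIID P) (v : Site d) :
    MeasurePreserving (shift v) P P := by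
  have := hP.isProbabilityMeasure
  refine ⟨measurable_shift v, ?_⟩
  have : IsProbabilityMeasure (P.map (shift v)) :=
    Measure.isProbabilityMeasure_map (measurable_shift v).aemeasurable
  obtain ⟨ν, -, hν⟩ := hP
  refine ext_of_generate_finite _ generateFrom_squareCylinders.symm
    (isPiSystem_squareCylinders (fun _ => MeasurableSpace.isPiSystem_measurableSet)
      fun _ => by simp) ?_ (by simp)
  rintro _ ⟨s, B, hB, rfl⟩
  have hB' : ∀ x, MeasurableSet (B x) := fun x => hB x (Set.mem_univ x)
  have hcyl : (s : Set (Site d)).pi B = {ω : Env d | ∀ x ∈ s, ω x ∈ B x} := by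
    ext ω; simp [Set.mem_pi]
  rw [Measure.map_apply (measurable_shift v) (.pi s.countable_toSet fun x _ => hB' x), hcyl,
    preimage_shift_setOf_forall_mem, hν _ _ fun x => hB' (x - v), hν s B hB', Finset.prod_map]
  exact Finset.prod_congr rfl fun x _ => by rw [addLeftEmbedding_apply, add_sub_cancel_left]

end Shift

section StepKernel

lemma tsum_envP_mul (ω : Env d) (x : Site d) (h : Site d → ℝ≥0∞) :
    ∑' z, envP ω z (x - z) * h z
      = ∑ s : StepIdx d, ENNReal.ofReal ((ω (x - stepVec s)).1 s) * h (x - stepVec s) := by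
  simp only [envP, Finset.sum_mul]
  rw [Summable.tsum_finsetSum fun _ _ => ENNReal.summable]
  refine Finset.sum_congr rfl fun s _ => ?_
  rw [tsum_eq_single (x - stepVec s) fun z hz => ?_]
  · simp
  · rw [if_neg fun h => hz (by rw [← h, sub_sub_cancel]), zero_mul]

end StepKernel

section QuenchedLaw

def extendPath {n : ℕ} (b : Fin n → Site d) (x : Site d) : Path d :=
  fun i => if h : i < n then b ⟨i, h⟩ else x

lemma extendPath_of_le {n : ℕ} (b : Fin n → Site d) (x : Site d) {i : ℕ} (hi : n ≤ i) :
    extendPath b x i = x :=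
  dif_neg hi.not_gt

lemma extendPath_snoc {n : ℕ} (b : Fin n → Site d) (z x : Site d) {i : ℕ} (hi : i ≤ n) :
    extendPath (Fin.snoc b z) x i = extendPath b z i := by
  rcases hi.lt_or_eq with hi | rfl
  · simp [extendPath, hi, Nat.lt_succ_of_lt hi, Fin.snoc, Fin.castLT]
  · simp [extendPath, Fin.snoc]

def pathWeight (ω : Env d) (y : Site d) (n : ℕ) (γ : Path d) : ℝ≥0∞ :=
  (if γ 0 = y then 1 else 0) * ∏ i ∈ Finset.range n, envP ω (γ i) (γ (i + 1) - γ i)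

lemma pathWeight_snoc (ω : Env d) (y : Site d) {n : ℕ} (b : Fin n → Site d) (z x : Site d) :
    pathWeight ω y (n + 1) (extendPath (Fin.snoc b z) x)
      = pathWeight ω y n (extendPath b z) * envP ω z (x - z) := by
  have hpre : ∀ i ≤ n, extendPath (Fin.snoc b z) x i = extendPath b z i :=
    fun _ => extendPath_snoc b z x
  simp only [pathWeight, Finset.prod_range_succ, hpre 0 n.zero_le, hpre n le_rfl,
    extendPath_of_le b z le_rfl, extendPath_of_le _ x le_rfl, mul_assoc]
  congr 2
  exact Finset.prod_congr rfl fun i hi => by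
    rw [hpre i (Finset.mem_range.1 hi).le, hpre (i + 1) (Finset.mem_range.1 hi)]

lemma measurableSet_cylinder (n : ℕ) (γ : Path d) :
    MeasurableSet {p : Path d | ∀ i ≤ n, p i = γ i} := by
  simp only [Set.ofPred_forall]
  exact .iInter fun i => .iInter fun _ =>
    measurableSet_eq_fun (measurable_pi_apply i) measurable_const

lemma setOf_eval_eq_iUnion (n : ℕ) (x : Site d) :
    {p : Path d | p n = x}
      = ⋃ b : Fin n → Site d, {p : Path d | ∀ i ≤ n, p i = extendPath b x i} := by
  ext p
  simp only [Set.mem_ofPred_eq, Set.mem_iUnion]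
  refine ⟨fun h => ⟨fun i => p i, fun i hi => ?_⟩, fun ⟨b, hb⟩ => ?_⟩
  · rcases hi.lt_or_eq with hi | rfl
    · simp [extendPath, hi]
    · rw [extendPath_of_le _ _ le_rfl, h]
  · rw [hb n le_rfl, extendPath_of_le _ _ le_rfl]

lemma pairwise_disjoint_cylinder_extendPath (n : ℕ) (x : Site d) :
    Pairwise (Function.onFun Disjoint fun b : Fin n → Site d =>
      {p : Path d | ∀ i ≤ n, p i = extendPath b x i}) := by
  refine fun b b' hbb' => Set.disjoint_left.2 fun p hp hp' => hbb' (funext fun i => ?_)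
  simpa [extendPath, i.2] using (hp i i.2.le).symm.trans (hp' i i.2.le)

variable {ω : Env d} {y : Site d} {μ : Measure (Path d)}

lemma IsQuenched.measure_eval_eq_tsum (hμ : IsQuenched ω y μ) (n : ℕ) (x : Site d) :
    μ {p : Path d | p n = x} = ∑' b : Fin n → Site d, pathWeight ω y n (extendPath b x) := by
  rw [setOf_eval_eq_iUnion, measure_iUnion (pairwise_disjoint_cylinder_extendPath n x)
    fun b => measurableSet_cylinder n _]
  exact tsum_congr fun b => hμ.2 n _

lemma IsQuenched.measure_eval_zero (hμ : IsQuenched ω y μ) (x : Site d) :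
    μ {p : Path d | p 0 = x} = if x = y then 1 else 0 := by
  rw [hμ.measure_eval_eq_tsum,
    tsum_eq_single Fin.elim0 fun b hb => (hb (Subsingleton.elim _ _)).elim]
  simp [pathWeight, extendPath]

lemma IsQuenched.measure_eval_succ (hμ : IsQuenched ω y μ) (n : ℕ) (x : Site d) :
    μ {p : Path d | p (n + 1) = x}
      = ∑' z : Site d, μ {p : Path d | p n = z} * envP ω z (x - z) := by
  rw [hμ.measure_eval_eq_tsum, ← (Fin.snocEquiv fun _ => Site d).tsum_eq, ENNReal.tsum_prod']
  refine tsum_congr fun z => ?_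
  rw [hμ.measure_eval_eq_tsum, ← ENNReal.tsum_mul_right]
  exact tsum_congr fun b => pathWeight_snoc ω y b z x

end QuenchedLaw

section InvariantMeasure

def IsInvariantMeasure (ω : Env d) (m : Site d → ℝ≥0∞) : Prop :=
  ∀ x, ∑' z, envP ω z (x - z) * m z = m x

lemma IsInvariantMeasure.tsum_measure_eval_mul {ω : Env d} {m : Site d → ℝ≥0∞}
    (hm : IsInvariantMeasure ω m) {μ : Site d → Measure (Path d)}
    (hμ : ∀ y, IsQuenched ω y (μ y)) (n : ℕ) (x : Site d) :
    ∑' y, μ y {p : Path d | p n = x} * m y = m x := by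
  induction n generalizing x with
  | zero => simp [(hμ _).measure_eval_zero x]
  | succ n ih =>
    calc ∑' y, μ y {p | p (n + 1) = x} * m y
        = ∑' y, ∑' z, envP ω z (x - z) * (μ y {p | p n = z} * m y) := by
          refine tsum_congr fun y => ?_
          rw [(hμ y).measure_eval_succ, ← ENNReal.tsum_mul_right]
          exact tsum_congr fun z => by ring
      _ = ∑' z, envP ω z (x - z) * ∑' y, μ y {p | p n = z} * m y := by
          rw [ENNReal.tsum_comm]
          exact tsum_congr fun z => ENNReal.tsum_mul_left
      _ = m x := by simp_rw [ih]; exact hm x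

end InvariantMeasure

section PointOfView

variable {P Q : Measure (Env d)}

lemma measurable_envAt_apply (z : Site d) (s : StepIdx d) :
    Measurable fun ω : Env d => (ω z).1 s :=
  (measurable_pi_apply s).comp (measurable_subtype_coe.comp (measurable_pi_apply z))

lemma InvariantPOV.lintegral_indicator_shift [IsFiniteMeasure Q] (hQ : InvariantPOV Q)
    {A : Set (Env d)} (hA : MeasurableSet A) :
    ∫⁻ ω, ∑ s : StepIdx d, ENNReal.ofReal ((ω 0).1 s) * A.indicator 1 (shift (stepVec s) ω) ∂Q
      = Q A := by
  set g : Env d → ℝ := A.indicator 1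
  have hg : Measurable g := measurable_one.indicator hA
  have hg_nonneg : ∀ ω, 0 ≤ g ω := Set.indicator_nonneg fun _ _ => zero_le_one
  have hg_le : ∀ ω, g ω ≤ 1 := Set.indicator_le_self' fun _ _ => zero_le_one
  have hofReal_g : ∀ ω, ENNReal.ofReal (g ω) = A.indicator 1 ω := fun ω => by
    by_cases h : ω ∈ A <;> simp [g, h]
  set H : Env d → ℝ := fun ω => ∑ s : StepIdx d, (ω 0).1 s * g (shift (stepVec s) ω)
  have hH_nonneg : ∀ ω, 0 ≤ H ω := fun ω =>
    Finset.sum_nonneg fun s _ => mul_nonneg ((ω 0).2.1 s) (hg_nonneg _)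
  have hH_le : ∀ ω, H ω ≤ 1 := fun ω => (ω 0).2.2 ▸
    Finset.sum_le_sum fun s _ => mul_le_of_le_one_right ((ω 0).2.1 s) (hg_le _)
  have hHm : Measurable H := Finset.measurable_sum _ fun s _ =>
    (measurable_envAt_apply 0 s).mul (hg.comp (measurable_shift _))
  have hHi : Integrable H Q := .of_bound hHm.aestronglyMeasurable 1 (ae_of_all _ fun ω => by
    rw [Real.norm_of_nonneg (hH_nonneg ω)]; exact hH_le ω)
  have hinv := congrArg ENNReal.ofReal
    (hQ g hg ⟨1, fun ω => abs_le.2 ⟨by linarith [hg_nonneg ω], hg_le ω⟩⟩)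
  rw [ofReal_integral_eq_lintegral_ofReal hHi (ae_of_all _ hH_nonneg), integral_indicator_one hA,
    ofReal_measureReal] at hinv
  rw [← hinv]
  refine lintegral_congr fun ω => ?_
  rw [ENNReal.ofReal_sum_of_nonneg fun s _ => mul_nonneg ((ω 0).2.1 s) (hg_nonneg _)]
  exact Finset.sum_congr rfl fun s _ => by rw [ENNReal.ofReal_mul ((ω 0).2.1 s), hofReal_g]

lemma lintegral_mul_indicator_shift [Measure.HaveLebesgueDecomposition Q P] (hQP : Q ≪ P)
    {v : Site d} (hv : MeasurePreserving (shift (-v)) P P) {φ : Env d → ℝ≥0∞}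
    (hφ : Measurable φ) {A : Set (Env d)} (hA : MeasurableSet A) :
    ∫⁻ ω, φ ω * A.indicator 1 (shift v ω) ∂Q
      = ∫⁻ ω in A, φ (shift (-v) ω) * Q.rnDeriv P (shift (-v) ω) ∂P := by
  have hψ : Measurable fun ω => φ ω * A.indicator 1 (shift v ω) :=
    hφ.mul ((measurable_one.indicator hA).comp (measurable_shift v))
  rw [← lintegral_rnDeriv_mul hQP hψ.aemeasurable,
    ← hv.lintegral_comp (f := fun ω => Q.rnDeriv P ω * (φ ω * A.indicator 1 (shift v ω)))
      ((Measure.measurable_rnDeriv Q P).mul hψ), ← lintegral_indicator hA]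
  refine lintegral_congr fun ω => ?_
  rw [shift_shift, neg_add_cancel, shift_zero]
  by_cases h : ω ∈ A <;> simp [h, mul_comm]

lemma rnDeriv_ae_eq_sum_shift [IsFiniteMeasure Q] (hIID : IsIID P) (hQinv : InvariantPOV Q)
    (hQP : Q ≪ P) :
    Q.rnDeriv P =ᵐ[P] fun ω => ∑ s : StepIdx d,
      ENNReal.ofReal ((ω (-stepVec s)).1 s) * Q.rnDeriv P (shift (-stepVec s) ω) := by
  have := hIID.isProbabilityMeasure
  have hf := Measure.measurable_rnDeriv Q P
  have hterm : ∀ s : StepIdx d, Measurable fun ω : Env d =>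
      ENNReal.ofReal ((ω (-stepVec s)).1 s) * Q.rnDeriv P (shift (-stepVec s) ω) := fun s =>
    (measurable_envAt_apply _ s).ennreal_ofReal.mul (hf.comp (measurable_shift _))
  refine ae_eq_of_forall_setLIntegral_eq_of_sigmaFinite hf
    (Finset.measurable_sum _ fun s _ => hterm s) fun A hA _ => ?_
  calc ∫⁻ ω in A, Q.rnDeriv P ω ∂P = Q A := Measure.setLIntegral_rnDeriv' hQP hA
    _ = ∑ s, ∫⁻ ω, ENNReal.ofReal ((ω 0).1 s) * A.indicator 1 (shift (stepVec s) ω) ∂Q := by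
        rw [← hQinv.lintegral_indicator_shift hA]
        exact lintegral_finsetSum _ fun s _ => (measurable_envAt_apply 0 s).ennreal_ofReal.mul
          ((measurable_one.indicator hA).comp (measurable_shift _))
    _ = ∑ s, ∫⁻ ω in A,
          ENNReal.ofReal ((ω (-stepVec s)).1 s) * Q.rnDeriv P (shift (-stepVec s) ω) ∂P :=
        Finset.sum_congr rfl fun s _ => by
          rw [lintegral_mul_indicator_shift hQP (hIID.measurePreserving_shift _)
            (measurable_envAt_apply 0 s).ennreal_ofReal hA]
          simp only [shift, add_zero]
    _ = _ := (lintegral_finsetSum _ fun s _ => hterm s).symm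

lemma ae_isInvariantMeasure_rnDeriv_shift [IsFiniteMeasure Q] (hIID : IsIID P)
    (hQinv : InvariantPOV Q) (hQP : Q ≪ P) :
    ∀ᵐ ω ∂P, IsInvariantMeasure ω fun x => Q.rnDeriv P (shift x ω) := by
  refine ae_all_iff.2 fun x => ?_
  filter_upwards [(hIID.measurePreserving_shift x).quasiMeasurePreserving.ae
    (rnDeriv_ae_eq_sum_shift hIID hQinv hQP)] with ω hω
  rw [tsum_envP_mul, hω]
  refine Finset.sum_congr rfl fun s _ => ?_
  simp only [shift_shift, sub_eq_add_neg]
  rfl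

end PointOfView

theorem statement17_general (d : ℕ)
    (P : Measure (Env d))
    (Pq : Env d → Site d → Measure (Path d)) (hPq : IsQuenchedFamily Pq)
    (hIID : IsIID P)
    (Q : Measure (Env d)) (hQ : IsProbabilityMeasure Q) (hQinv : InvariantPOV Q)
    (hQP : Q ≪ P) :
    ∀ᵐ ω ∂P, ∀ (n : ℕ) (x : Site d),
      Q.rnDeriv P (shift x ω) =
        ∑' y : Site d, Pq ω y {p : Path d | p n = x} * Q.rnDeriv P (shift y ω) := by
  filter_upwards [ae_isInvariantMeasure_rnDeriv_shift hIID hQinv hQP] with ω hω n x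
  exact (hω.tsum_measure_eval_mul (fun y => hPq.1 ω y) n x).symm

/-- Harmonicity of the Radon–Nikodym derivative `f = dQ/dP` of the
invariant equivalent measure: `f(σ_x ω) = Σ_y P_ω^y(X_n = x) f(σ_y ω)`. -/
theorem statement17 (d : ℕ) (hd : 1 ≤ d)
    (P : Measure (Env d)) [IsProbabilityMeasure P]
    (Pq : Env d → Site d → Measure (Path d)) (hPq : IsQuenchedFamily Pq)
    (hIID : IsIID P)
    (Q : Measure (Env d)) (hQ : IsProbabilityMeasure Q) (hQinv : InvariantPOV Q)
    (hQP : Q ≪ P) (hPQ : P ≪ Q) :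
    ∀ᵐ ω ∂P, ∀ (n : ℕ) (x : Site d),
      Q.rnDeriv P (shift x ω) =
        ∑' y : Site d, Pq ω y {p : Path d | p n = x} * Q.rnDeriv P (shift y ω) :=
  statement17_general d P Pq hPq hIID Q hQ hQinv hQP

end RWRE
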